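/- Let X be a real Banach space satisfying condition (II) that admits an M-basis {(x_α, x*_α)}_{α<λ}. Then for every f ∈ X* the set {α < λ : f(x_α) ≠ 0} is countable; consequently, X is WLD, so that for Banach spaces admitting an M-basis, condition (II), Corson's property (C), and being WLD are all equivalent. -/

import Mathlib

open Cardinal Ordinal Set Pointwise

universe u

noncomputable def closedSpan {X : Type u} [SeminormedAddCommGroup X] [NormedSpace ℝ X]
    (s : Set X) : Submodule ℝ X :=
  (Submodule.span ℝ s).topologicalClosure

/-- condition (II) -/
def CondII (X : Type u) [SeminormedAddCommGroup X] [NormedSpace ℝ X] : Prop :=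
  ∀ κ : Cardinal.{u}, κ.IsRegular → ℵ₀ < κ →
    ∀ Z : Ordinal.{u} → Submodule ℝ X,
      (∀ α < κ.ord, IsClosed ((Z α : Set X))) →
      (∀ α β, α ≤ β → β < κ.ord → Z β ≤ Z α) →
      ∀ f : X →L[ℝ] ℝ, (∀ v ∈ ⋂ α ∈ Set.Iio κ.ord, (Z α : Set X), f v = 0) →
        ∃ α < κ.ord, ∀ v ∈ Z α, f v = 0

/-- `X` is WLD: it admits an M-basis all of whose supports of functionals are countable. -/
def IsWLD (X : Type u) [SeminormedAddCommGroup X] [NormedSpace ℝ X] : Prop :=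
  ∃ (ι : Type u) (x : ι → X) (f : ι → (X →L[ℝ] ℝ)),
    (∀ i, f i (x i) = 1) ∧ (∀ i j, i ≠ j → f i (x j) = 0) ∧
    closedSpan (Set.range x) = ⊤ ∧
    (∀ v : X, v ≠ 0 → ∃ i, f i v ≠ 0) ∧
    (∀ g : X →L[ℝ] ℝ, {i | g (x i) ≠ 0}.Countable)

/-- Corson's property (C) -/
def PropertyC (X : Type u) [SeminormedAddCommGroup X] [NormedSpace ℝ X] : Prop :=
  ∀ 𝒞 : Set (Set X), (∀ C ∈ 𝒞, IsClosed C ∧ Convex ℝ C) → ⋂₀ 𝒞 = ∅ →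
    ∃ 𝒟 ⊆ 𝒞, 𝒟.Countable ∧ ⋂₀ 𝒟 = ∅

/-!
If a functional `g` had uncountable support on the M-basis, an injective enumeration `e` of `ω₁`
of its indices would give the decreasing closed subspaces `Z ξ = [x (e η) : ξ ≤ η < ω₁]`. By
biorthogonality and separation `⋂ Z ξ = 0`, so condition (II) makes `g` vanish on some `Z ξ`,
which contains `x (e ξ)`.

Countable supports give property (C) by a closing-off argument. Separate every point `v` from
some `C v ∈ 𝒞` by a functional `g v` of norm at most one, and build a countable index set `M`
containing the supports of countably many `g v` whose half-spaces cover `[x i : i ∈ M]`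
(Lindelöf), and the supports of norming functionals of a dense subset of `[x i : i ∈ M]`. The
latter make `a + b ↦ a` a norm-one projection of `[x i : i ∈ M] + [x i : i ∈ s \ M]`, so this
sum is closed and hence all of `X`. A point `a + b` of the intersection of the countably many
chosen `C v` is then impossible: `a` lies in a half-space `t v < g v`, and `g v b = 0`.
-/
open Filter Topology

section ClosedSpan

variable {X : Type*} [NormedAddCommGroup X] [NormedSpace ℝ X]

lemma subset_closedSpan (t : Set X) : t ⊆ closedSpan t :=
  fun _ hy => Submodule.le_topologicalClosure _ (Submodule.subset_span hy)

lemma isClosed_closedSpan (t : Set X) : IsClosed (closedSpan t : Set X) :=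
  Submodule.isClosed_topologicalClosure _

lemma closedSpan_mono {t t' : Set X} (h : t ⊆ t') : closedSpan t ≤ closedSpan t' :=
  Submodule.topologicalClosure_mono (Submodule.span_mono h)

lemma map_eq_zero_of_mem_closedSpan {g : X →L[ℝ] ℝ} {t : Set X} (hg : ∀ y ∈ t, g y = 0)
    {v : X} (hv : v ∈ closedSpan t) : g v = 0 :=
  Submodule.topologicalClosure_minimal _ (Submodule.span_le.mpr fun y hy => hg y hy)
    g.isClosed_ker hv

end ClosedSpan

section NormedSpace

open TopologicalSpace

lemma exists_countable_subcover_of_isSeparable {Y : Type*} [PseudoMetricSpace Y] {A : Set Y}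
    (hA : IsSeparable A) {κ : Type*} (U : κ → Set Y) (hU : ∀ i, IsOpen (U i)) :
    ∃ T : Set κ, T.Countable ∧ A ∩ ⋃ i, U i ⊆ ⋃ i ∈ T, U i := by
  set S := A ∩ ⋃ i, U i
  have : SeparableSpace S := (hA.mono inter_subset_left).separableSpace
  have : SecondCountableTopology S := UniformSpace.secondCountable_of_separable S
  exact (isLindelof_iff_isLindelof_univ.mpr isLindelof_univ).elim_countable_subcover U hU
    inter_subset_right

lemma exists_monotone_countable_seq {ι : Type*} (F : Set ι → Set ι)
    (hF : ∀ t, t.Countable → (F t).Countable) :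
    ∃ M : ℕ → Set ι, Monotone M ∧ (∀ n, (M n).Countable) ∧ ∀ n, F (M n) ⊆ M (n + 1) := by
  let step : Set ι → Set ι := fun t => t ∪ F t
  have hsucc (n : ℕ) : step^[n + 1] ∅ = step (step^[n] ∅) := Function.iterate_succ_apply' ..
  refine ⟨fun n => step^[n] ∅, monotone_nat_of_le_succ fun n => ?_, fun n => ?_,
    fun n => ?_⟩
  · exact (hsucc n).symm ▸ subset_union_left
  · induction n with
    | zero => exact countable_empty
    | succ n ih => simpa only [hsucc] using ih.union (hF _ ih)
  · simpa only [hsucc] using subset_union_right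

variable {X : Type*} [NormedAddCommGroup X] [NormedSpace ℝ X]

lemma apply_le_norm_of_norm_le_one {φ : X →L[ℝ] ℝ} (hφ : ‖φ‖ ≤ 1) (y : X) : φ y ≤ ‖y‖ :=
  (le_abs_self _).trans ((φ.le_of_opNorm_le hφ y).trans_eq (one_mul _))

lemma exists_separating_functional_norm_le_one {C : Set X} (hC : IsClosed C)
    (hCconv : Convex ℝ C) {v : X} (hv : v ∉ C) :
    ∃ (g : X →L[ℝ] ℝ) (t : ℝ), ‖g‖ ≤ 1 ∧ (∀ c ∈ C, g c < t) ∧ t < g v := by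
  obtain ⟨g, t, hgC, hgv⟩ := geometric_hahn_banach_closed_point hCconv hC hv
  have hr : 0 < (‖g‖ + 1)⁻¹ := by positivity
  refine ⟨(‖g‖ + 1)⁻¹ • g, (‖g‖ + 1)⁻¹ * t, ?_, fun c hc => ?_, ?_⟩
  · rw [norm_smul, norm_inv, Real.norm_of_nonneg (by positivity), inv_mul_le_one₀ (by positivity)]
    exact le_add_of_nonneg_right zero_le_one
  · exact mul_lt_mul_of_pos_left (hgC c hc) hr
  · exact mul_lt_mul_of_pos_left hgv hr

lemma isSeparable_closedSpan {t : Set X} (ht : t.Countable) :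
    IsSeparable (closedSpan t : Set X) := by
  rw [closedSpan, Submodule.topologicalClosure_coe]
  exact ht.isSeparable.span.closure

lemma closedSpan_iUnion_subset_closure {t : ℕ → Set X} (ht : Monotone t) :
    (closedSpan (⋃ n, t n) : Set X) ⊆ closure (⋃ n, (closedSpan (t n) : Set X)) := by
  have hdir : Directed (· ≤ ·) fun n => Submodule.span ℝ (t n) :=
    Monotone.directed_le fun _ _ h => Submodule.span_mono (ht h)
  rw [closedSpan, Submodule.topologicalClosure_coe, Submodule.span_iUnion,
    Submodule.coe_iSup_of_directed _ hdir]
  exact closure_mono (iUnion_mono fun n => Submodule.le_topologicalClosure _)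

lemma norm_le_norm_add_of_mem_closure {B : Set X} {a b : X}
    (ha : a ∈ closure {w | ∃ φ : X →L[ℝ] ℝ, ‖φ‖ ≤ 1 ∧ φ w = ‖w‖ ∧ ∀ b ∈ B, φ b = 0})
    (hb : b ∈ B) : ‖a‖ ≤ ‖a + b‖ := by
  suffices h : a ∈ {w : X | ‖w‖ ≤ ‖a + b‖ + ‖w - a‖} by simpa using h
  refine closure_minimal ?_ (isClosed_le (by fun_prop) (by fun_prop)) ha
  rintro w ⟨φ, hφ, hφw, hφB⟩
  calc ‖w‖ = φ (a + b) + φ (w - a) - φ b := by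
        rw [← hφw, ← map_add, ← map_sub]; congr 1; abel
    _ = φ (a + b) + φ (w - a) := by rw [hφB b hb, _root_.sub_zero]
    _ ≤ ‖a + b‖ + ‖w - a‖ :=
      add_le_add (apply_le_norm_of_norm_le_one hφ _) (apply_le_norm_of_norm_le_one hφ _)

lemma isClosed_sup_of_norm_le_norm_add [CompleteSpace X] {A B : Submodule ℝ X}
    (hA : IsClosed (A : Set X)) (hB : IsClosed (B : Set X))
    (h : ∀ a ∈ A, ∀ b ∈ B, ‖a‖ ≤ ‖a + b‖) : IsClosed ((A ⊔ B : Submodule ℝ X) : Set X) := by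
  refine IsSeqClosed.isClosed fun z p hz hzp => ?_
  choose a ha b hb hab using fun k => Submodule.mem_sup.mp (hz k)
  have hcauchy : CauchySeq a := by
    refine Metric.cauchySeq_iff.mpr fun ε hε => ?_
    obtain ⟨N, hN⟩ := Metric.cauchySeq_iff.mp hzp.cauchySeq ε hε
    refine ⟨N, fun k hk l hl => lt_of_le_of_lt ?_ (hN k hk l hl)⟩
    rw [dist_eq_norm, dist_eq_norm, ← hab k, ← hab l, add_sub_add_comm]
    exact h _ (A.sub_mem (ha k) (ha l)) _ (B.sub_mem (hb k) (hb l))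
  obtain ⟨a₀, ha₀⟩ := cauchySeq_tendsto_of_complete hcauchy
  have hb₀ : Tendsto b atTop (𝓝 (p - a₀)) :=
    (hzp.sub ha₀).congr fun k => by rw [← hab k, add_sub_cancel_left]
  exact Submodule.mem_sup.mpr ⟨a₀, hA.mem_of_tendsto ha₀ (.of_forall ha),
    p - a₀, hB.mem_of_tendsto hb₀ (.of_forall hb), add_sub_cancel a₀ p⟩


lemma exists_countable_margin_cover_of_isSeparable {A : Set X} (hA : IsSeparable A)
    (g : X → X →L[ℝ] ℝ) (t : X → ℝ) : ∃ V : Set X, V.Countable ∧ ∀ m : ℕ, ∀ w ∈ A, ∀ u,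
      t u + 1 / (m + 1) < g u w → ∃ v ∈ V, t v + 1 / (m + 1) < g v w := by
  choose T hT hTU using fun m : ℕ => exists_countable_subcover_of_isSeparable hA
    (fun v => {y | t v + 1 / (m + 1) < g v y}) fun v => isOpen_lt continuous_const (g v).continuous
  refine ⟨⋃ m, T m, countable_iUnion hT, fun m w hw u hu => ?_⟩
  obtain ⟨v, hv, hwv⟩ := mem_iUnion₂.mp (hTU m ⟨hw, mem_iUnion.mpr ⟨u, hu⟩⟩)
  exact ⟨v, mem_iUnion.mpr ⟨m, hv⟩, hwv⟩

lemma exists_lt_apply_of_mem_closure {g : X → X →L[ℝ] ℝ} {t : X → ℝ} (hg : ∀ v, ‖g v‖ ≤ 1)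
    (ht : ∀ v, t v < g v v) {W V : Set X}
    (hWV : ∀ m : ℕ, ∀ w ∈ W, ∀ u, t u + 1 / (m + 1) < g u w → ∃ v ∈ V, t v + 1 / (m + 1) < g v w)
    {a : X} (ha : a ∈ closure W) : ∃ v ∈ V, t v < g v a := by
  obtain ⟨m, hm⟩ := exists_nat_one_div_lt (half_pos (sub_pos.mpr (ht a)))
  obtain ⟨w, hw, haw⟩ := Metric.mem_closure_iff.mp ha _ (Nat.one_div_pos_of_nat (n := m))
  have hga := apply_le_norm_of_norm_le_one (hg a) (a - w)
  rw [map_sub, ← dist_eq_norm] at hga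
  obtain ⟨v, hv, hwv⟩ := hWV m w hw a (by linarith)
  have hgv := apply_le_norm_of_norm_le_one (hg v) (w - a)
  rw [map_sub, ← dist_eq_norm, dist_comm] at hgv
  exact ⟨v, hv, by linarith⟩

end NormedSpace

section MBasis

variable {X : Type*} [NormedAddCommGroup X] [NormedSpace ℝ X] {ι : Type*} {s : Set ι}
  {x : ι → X} {f : ι → X →L[ℝ] ℝ}

def coordSupport (s : Set ι) (x : ι → X) (g : X →L[ℝ] ℝ) : Set ι :=
  {i | i ∈ s ∧ g (x i) ≠ 0}

lemma map_eq_zero_of_coordSupport_subset {g : X →L[ℝ] ℝ} {M : Set ι}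
    (hg : coordSupport s x g ⊆ M) {b : X} (hb : b ∈ closedSpan (x '' (s \ M))) : g b = 0 := by
  refine map_eq_zero_of_mem_closedSpan ?_ hb
  rintro _ ⟨i, ⟨his, hiM⟩, rfl⟩
  by_contra hne
  exact hiM (hg ⟨his, hne⟩)

lemma apply_eq_zero_of_mem_closedSpan_image
    (hoff : ∀ i ∈ s, ∀ j ∈ s, i ≠ j → f i (x j) = 0)
    {i : ι} (hi : i ∈ s) {t : Set ι} (hts : t ⊆ s) (hit : i ∉ t) {v : X}
    (hv : v ∈ closedSpan (x '' t)) : f i v = 0 := by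
  refine map_eq_zero_of_mem_closedSpan ?_ hv
  rintro _ ⟨j, hj, rfl⟩
  exact hoff i hi j (hts hj) (ne_of_mem_of_not_mem hj hit).symm

end MBasis

section CountableSupport

open Cardinal Order

lemma exists_tail_notMem {ι : Type*} {o : Ordinal} (ho : IsSuccLimit o) {e : Iio o → ι}
    (he : Function.Injective e) (i : ι) : ∃ ξ < o, i ∉ e '' {η | ξ ≤ η} := by
  by_cases hi : i ∈ range e
  · obtain ⟨η, rfl⟩ := hi
    refine ⟨succ η, ho.succ_lt η.2, ?_⟩
    rintro ⟨η', hη', heq⟩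
    rw [he heq] at hη'
    exact (lt_succ (η : Ordinal)).not_ge hη'
  · exact ⟨0, ho.bot_lt, fun ⟨η, _, hη⟩ => hi ⟨η, hη⟩⟩

lemma exists_embedding_Iio_omega_one {ι : Type*} {S : Set ι} (hS : ¬ S.Countable) :
    Nonempty (Iio (ℵ₁ : Cardinal.{u}).ord ↪ S) := by
  rw [← le_aleph0_iff_set_countable, not_le, ← succ_le_iff, succ_aleph0] at hS
  rw [← lift_mk_le']
  simpa [Cardinal.mk_Iio_ordinal] using hS

variable {X : Type u} [NormedAddCommGroup X] [NormedSpace ℝ X] {ι : Type*} {s : Set ι}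
  {x : ι → X} {f : ι → X →L[ℝ] ℝ}

lemma eq_zero_of_forall_mem_closedSpan_tail
    (hoff : ∀ i ∈ s, ∀ j ∈ s, i ≠ j → f i (x j) = 0)
    (hsep : ∀ v : X, v ≠ 0 → ∃ i ∈ s, f i v ≠ 0) {o : Ordinal} (ho : IsSuccLimit o)
    {e : Iio o → ι} (he : Function.Injective e) (hes : ∀ η, e η ∈ s) {v : X}
    (hv : ∀ ξ < o, v ∈ closedSpan (x '' (e '' {η | ξ ≤ η}))) : v = 0 := by
  by_contra hv0
  obtain ⟨i, hi, hfi⟩ := hsep v hv0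
  obtain ⟨ξ, hξ, hiξ⟩ := exists_tail_notMem ho he i
  exact hfi (apply_eq_zero_of_mem_closedSpan_image hoff hi
    (image_subset_iff.mpr fun η _ => hes η) hiξ (hv ξ hξ))

theorem countable_coordSupport_of_condII (hII : CondII X)
    (hoff : ∀ i ∈ s, ∀ j ∈ s, i ≠ j → f i (x j) = 0)
    (hsep : ∀ v : X, v ≠ 0 → ∃ i ∈ s, f i v ≠ 0) (g : X →L[ℝ] ℝ) :
    (coordSupport s x g).Countable := by
  by_contra hS
  obtain ⟨emb⟩ := exists_embedding_Iio_omega_one.{u} hS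
  set e : Iio (ℵ₁ : Cardinal.{u}).ord → ι := fun η => emb η
  have he : Function.Injective e := Subtype.val_injective.comp emb.injective
  let Z : Ordinal.{u} → Submodule ℝ X := fun ξ => closedSpan (x '' (e '' {η | ξ ≤ η}))
  obtain ⟨ξ, hξ, hgZ⟩ := hII ℵ₁ isRegular_aleph_one aleph0_lt_aleph_one Z
    (fun _ _ => isClosed_closedSpan _)
    (fun _ _ hle _ => closedSpan_mono (image_mono (image_mono fun η hη => hle.trans hη)))
    g (fun v hv => by
      rw [eq_zero_of_forall_mem_closedSpan_tail hoff hsep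
        (isSuccLimit_ord aleph0_lt_aleph_one.le) he (fun η => (emb η).2.1)
        (fun ξ hξ => mem_iInter₂.mp hv ξ hξ), map_zero])
  exact (emb ⟨ξ, hξ⟩).2.2 (hgZ _ (subset_closedSpan _ ⟨_, ⟨⟨ξ, hξ⟩, le_refl ξ, rfl⟩, rfl⟩))

end CountableSupport

section WLD

variable {X : Type u} [NormedAddCommGroup X] [NormedSpace ℝ X] {ι : Type*} {s : Set ι}
  {x : ι → X} {f : ι → X →L[ℝ] ℝ}

theorem isWLD_of_countable_coordSupport [Small.{u} s] (hdiag : ∀ i ∈ s, f i (x i) = 1)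
    (hoff : ∀ i ∈ s, ∀ j ∈ s, i ≠ j → f i (x j) = 0) (hgen : closedSpan (x '' s) = ⊤)
    (hsep : ∀ v : X, v ≠ 0 → ∃ i ∈ s, f i v ≠ 0)
    (hcnt : ∀ g : X →L[ℝ] ℝ, (coordSupport s x g).Countable) : IsWLD X := by
  let e : Shrink.{u} s ≃ s := (equivShrink s).symm
  refine ⟨Shrink.{u} s, fun k => x (e k), fun k => f (e k), fun k => hdiag _ (e k).2,
    fun k l hkl => hoff _ (e k).2 _ (e l).2 (Subtype.val_injective.ne (e.injective.ne hkl)),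
    ?_, fun v hv => ?_, fun g => ?_⟩
  · rwa [range_comp' x, range_comp' Subtype.val, e.range_eq_univ, image_univ, Subtype.range_coe]
  · obtain ⟨i, hi, hfi⟩ := hsep v hv
    exact ⟨e.symm ⟨i, hi⟩, by simpa [e] using hfi⟩
  · refine ((hcnt g).preimage (Subtype.val_injective.comp e.injective)).mono fun k hk => ?_
    exact ⟨(e k).2, hk⟩

end WLD

section PropertyCOfCountableSupport

variable {X : Type*} [NormedAddCommGroup X] [NormedSpace ℝ X] {ι : Type*} {s : Set ι}
  {x : ι → X}

lemma closedSpan_sup_closedSpan_diff_eq_top [CompleteSpace X] (hgen : closedSpan (x '' s) = ⊤)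
    {M : Set ι} (hM : ∀ a ∈ closedSpan (x '' M), ∀ b ∈ closedSpan (x '' (s \ M)), ‖a‖ ≤ ‖a + b‖) :
    closedSpan (x '' M) ⊔ closedSpan (x '' (s \ M)) = ⊤ := by
  rw [eq_top_iff, ← hgen]
  refine Submodule.topologicalClosure_minimal _ (Submodule.span_le.mpr ?_)
    (isClosed_sup_of_norm_le_norm_add (isClosed_closedSpan _) (isClosed_closedSpan _) hM)
  rintro _ ⟨i, hi, rfl⟩
  by_cases hiM : i ∈ M
  · exact Submodule.mem_sup_left (subset_closedSpan _ ⟨i, hiM, rfl⟩)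
  · exact Submodule.mem_sup_right (subset_closedSpan _ ⟨i, ⟨hi, hiM⟩, rfl⟩)

theorem exists_countable_separating_of_countable_coordSupport
    (hcnt : ∀ g : X →L[ℝ] ℝ, (coordSupport s x g).Countable)
    (g : X → X →L[ℝ] ℝ) (t : X → ℝ) (hg : ∀ v, ‖g v‖ ≤ 1) (ht : ∀ v, t v < g v v) :
    ∃ (M : Set ι) (V : Set X), V.Countable ∧ (∀ v ∈ V, coordSupport s x (g v) ⊆ M) ∧
      (∀ a ∈ closedSpan (x '' M), ∃ v ∈ V, t v < g v a) ∧
      ∀ a ∈ closedSpan (x '' M), ∀ b ∈ closedSpan (x '' (s \ M)), ‖a‖ ≤ ‖a + b‖ := by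
  choose φ hφ hφw using fun w : X => exists_dual_vector'' ℝ w
  have hstage : ∀ N : Set ι, N.Countable → ∃ V D : Set X, V.Countable ∧ D.Countable ∧
      (∀ m : ℕ, ∀ w ∈ closedSpan (x '' N), ∀ u, t u + 1 / (m + 1) < g u w →
        ∃ v ∈ V, t v + 1 / (m + 1) < g v w) ∧
      (closedSpan (x '' N) : Set X) ⊆ closure D := by
    intro N hN
    have hsep := isSeparable_closedSpan (hN.image x)
    obtain ⟨V, hV, hVU⟩ := exists_countable_margin_cover_of_isSeparable hsep g t
    obtain ⟨D, hD, hND⟩ := hsep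
    exact ⟨V, D, hV, hD, hVU, hND⟩
  choose! V D hV hD hVU hND using hstage
  obtain ⟨M, hMmono, hMcnt, hMstep⟩ := exists_monotone_countable_seq
    (fun N => (⋃ v ∈ V N, coordSupport s x (g v)) ∪ ⋃ w ∈ D N, coordSupport s x (φ w))
    fun N hN => ((hV N hN).biUnion fun _ _ => hcnt _).union ((hD N hN).biUnion fun _ _ => hcnt _)
  have hstep (n : ℕ) := (hMstep n).trans (subset_iUnion M (n + 1))
  have hclosure : (closedSpan (x '' ⋃ n, M n) : Set X) ⊆
      closure (⋃ n, (closedSpan (x '' M n) : Set X)) := by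
    rw [image_iUnion]
    exact closedSpan_iUnion_subset_closure fun _ _ h => image_mono (hMmono h)
  refine ⟨⋃ n, M n, ⋃ n, V (M n), countable_iUnion fun n => hV _ (hMcnt n), ?_,
    fun a ha => exists_lt_apply_of_mem_closure hg ht ?_ (hclosure ha), fun a ha b hb => ?_⟩
  · simp only [mem_iUnion]
    rintro v ⟨n, hv⟩
    exact (subset_biUnion_of_mem hv).trans (subset_union_left.trans (hstep n))
  · intro m w hw u hu
    obtain ⟨n, hwn⟩ := mem_iUnion.mp hw
    obtain ⟨v, hv, hwv⟩ := hVU _ (hMcnt n) m w hwn u hu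
    exact ⟨v, mem_iUnion.mpr ⟨n, hv⟩, hwv⟩
  · refine norm_le_norm_add_of_mem_closure (closure_mono (s := ⋃ n, D (M n)) ?_ ?_) hb
    · intro w hw
      obtain ⟨n, hw⟩ := mem_iUnion.mp hw
      refine ⟨φ w, hφ w, hφw w, fun b hb => map_eq_zero_of_coordSupport_subset ?_ hb⟩
      exact (subset_biUnion_of_mem hw).trans (subset_union_right.trans (hstep n))
    · refine closure_minimal (iUnion_subset fun n => ?_) isClosed_closure (hclosure ha)
      exact (hND _ (hMcnt n)).trans (closure_mono (subset_iUnion (fun n => D (M n)) n))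

theorem propertyC_of_countable_coordSupport [CompleteSpace X] (hgen : closedSpan (x '' s) = ⊤)
    (hcnt : ∀ g : X →L[ℝ] ℝ, (coordSupport s x g).Countable) : PropertyC X := by
  intro 𝒞 h𝒞 hempty
  have hsep (v : X) : ∃ C ∈ 𝒞, ∃ (g : X →L[ℝ] ℝ) (t : ℝ),
      ‖g‖ ≤ 1 ∧ (∀ c ∈ C, g c < t) ∧ t < g v := by
    obtain ⟨C, hC, hvC⟩ : ∃ C ∈ 𝒞, v ∉ C := by
      simpa using (hempty ▸ notMem_empty v : v ∉ ⋂₀ 𝒞)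
    exact ⟨C, hC, exists_separating_functional_norm_le_one (h𝒞 C hC).1 (h𝒞 C hC).2 hvC⟩
  choose C hC g t hg hgC ht using hsep
  obtain ⟨M, V, hV, hVM, hcover, hnorm⟩ :=
    exists_countable_separating_of_countable_coordSupport hcnt g t hg ht
  refine ⟨C '' V, image_subset_iff.mpr fun v _ => hC v, hV.image C,
    eq_empty_iff_forall_notMem.mpr fun z hz => ?_⟩
  obtain ⟨a, ha, b, hb, rfl⟩ := Submodule.mem_sup.mp
    ((closedSpan_sup_closedSpan_diff_eq_top hgen hnorm).symm ▸ Submodule.mem_top : z ∈ _)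
  obtain ⟨v, hv, hva⟩ := hcover a ha
  have hgb : g v b = 0 := map_eq_zero_of_coordSupport_subset (hVM v hv) hb
  refine (hgC v _ (mem_sInter.mp hz _ (mem_image_of_mem C hv))).not_gt ?_
  rwa [map_add, hgb, add_zero]

end PropertyCOfCountableSupport

theorem stmt19 {X : Type u} [NormedAddCommGroup X] [NormedSpace ℝ X] [CompleteSpace X]
    (hII : CondII X)
    (lam : Ordinal.{u})
    (x : Ordinal.{u} → X) (f : Ordinal.{u} → (X →L[ℝ] ℝ))
    (hbiorth : ∀ α < lam, ∀ β < lam, f α (x β) = if α = β then 1 else 0)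
    (hgen : closedSpan (x '' Set.Iio lam) = ⊤)
    (hsep : ∀ v : X, v ≠ 0 → ∃ α < lam, f α v ≠ 0) :
    -- every functional has countable support on the M-basis …
    (∀ g : X →L[ℝ] ℝ, {α : Ordinal.{u} | α < lam ∧ g (x α) ≠ 0}.Countable) ∧
    -- … consequently `X` is WLD, and has property (C); so for spaces admitting an
    -- M-basis, condition (II), property (C) and WLD coincide
    IsWLD X ∧ PropertyC X := by
  have hdiag : ∀ α < lam, f α (x α) = 1 := fun α hα => by simpa using hbiorth α hα α hα
  have hoff : ∀ α < lam, ∀ β < lam, α ≠ β → f α (x β) = 0 := fun α hα β hβ hne => by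
    simpa [hne] using hbiorth α hα β hβ
  have hcnt : ∀ g : X →L[ℝ] ℝ, (coordSupport (Iio lam) x g).Countable :=
    countable_coordSupport_of_condII hII hoff hsep
  exact ⟨hcnt, isWLD_of_countable_coordSupport (s := Iio lam) hdiag hoff hgen hsep hcnt,
    propertyC_of_countable_coordSupport hgen hcnt⟩
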